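/- arXiv:2501.16723 — 2 statements merged into one kernel-verified Lean document; each statement's English description precedes it below -/
import Mathlib

section
/- Let x ≥ 2, z ≥ 2, θ ∈ (0,1), λ > 0, and set y = x^θ. Let B be a finite set of integers b with 1 < b ≤ x such that every prime factor of every b ∈ B is at least z. For a prime p write #B_p = #{ b ∈ B : p | b } and w_p = 1 − log p/log y. Then #B − λ · ∑_{z ≤ p ≤ y} w_p · #B_p ≤ (1 + λ/θ) · #{ b ∈ B : ω(b) < 1/λ + 1/θ }, where the sum runs over primes p and ω(b) is the number of distinct prime factors of b. -/
/-! Double counting turns the weighted prime sum into `∑_{b ∈ B} ∑_{p ∣ b, z ≤ p ≤ y} w_p`.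
Since `∑_{p ∣ b} log p ≤ log b ≤ log x = log y / θ` and the weights of primes `p > y` are
negative, the inner sum is at least `ω(b) - 1/θ`. So the left-hand side is at most
`∑_{b ∈ B} (1 + λ/θ - λ ω(b))`, whose summands are at most `1 + λ/θ` and are nonpositive
once `ω(b) ≥ 1/λ + 1/θ`. -/

open Finset

theorem Nat.sum_log_primeFactors_le_log {n : ℕ} (hn : n ≠ 0) :
    ∑ p ∈ n.primeFactors, Real.log p ≤ Real.log n := by
  have hpos : ∀ p ∈ n.primeFactors, (0 : ℝ) < p := fun p hp =>
    Nat.cast_pos.mpr (Nat.prime_of_mem_primeFactors hp).pos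
  rw [← Real.log_prod fun p hp => (hpos p hp).ne']
  refine Real.log_le_log (prod_pos hpos) ?_
  rw [← Nat.cast_prod]
  exact_mod_cast Nat.le_of_dvd (Nat.pos_of_ne_zero hn) (Nat.prod_primeFactors_dvd n)

theorem Finset.sum_mul_card_filter {α β R : Type*} [CommSemiring R] (s : Finset α) (t : Finset β)
    (r : α → β → Prop) [∀ a b, Decidable (r a b)] (f : α → R) :
    ∑ a ∈ s, f a * #{b ∈ t | r a b} = ∑ b ∈ t, ∑ a ∈ s with r a b, f a := by
  simp_rw [natCast_card_filter, mul_sum, mul_ite, mul_one, mul_zero]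
  rw [sum_comm]
  simp_rw [sum_filter]

theorem Finset.sum_le_mul_card_filter {ι R : Type*} [Semiring R] [PartialOrder R]
    [IsOrderedRing R] {s : Finset ι} {g : ι → R} {K : R} (q : ι → Prop) [DecidablePred q]
    (hK : ∀ i ∈ s, g i ≤ K) (hq : ∀ i ∈ s, ¬ q i → g i ≤ 0) :
    ∑ i ∈ s, g i ≤ K * #{i ∈ s | q i} := by
  rw [← sum_filter_add_sum_filter_not s q, ← nsmul_eq_mul']
  refine add_le_of_le_of_nonpos (sum_le_card_nsmul _ _ _ fun i hi => hK i (mem_filter.mp hi).1) ?_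
  exact sum_nonpos fun i hi => hq i (mem_filter.mp hi).1 (mem_filter.mp hi).2

theorem Nat.card_primeFactors_sub_le_sum_filter {n : ℕ} (hn : n ≠ 0) {y : ℝ} (hy : 1 < y) :
    (#n.primeFactors : ℝ) - Real.log n / Real.log y ≤
      ∑ p ∈ n.primeFactors.filter (fun p : ℕ => (p : ℝ) ≤ y), (1 - Real.log p / Real.log y) := by
  have hlogy : 0 < Real.log y := Real.log_pos hy
  calc (#n.primeFactors : ℝ) - Real.log n / Real.log y
      ≤ #n.primeFactors - (∑ p ∈ n.primeFactors, Real.log p) / Real.log y := by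
        gcongr; exact sum_log_primeFactors_le_log hn
    _ = ∑ p ∈ n.primeFactors, (1 - Real.log p / Real.log y) := by
        rw [sum_sub_distrib, sum_div]; simp
    _ ≤ ∑ p ∈ n.primeFactors.filter (fun p : ℕ => (p : ℝ) ≤ y), (1 - Real.log p / Real.log y) := by
        rw [← sum_filter_add_sum_filter_not _ (fun p : ℕ => (p : ℝ) ≤ y)]
        refine add_le_of_nonpos_right (sum_nonpos fun p hp => ?_)
        have hyp : y < p := not_le.mp (mem_filter.mp hp).2
        rw [sub_nonpos, one_le_div hlogy]
        exact Real.log_le_log (by linarith) hyp.le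

theorem Nat.card_primeFactors_sub_inv_le_sum_filter {b : ℕ} {x θ : ℝ} (hb : 1 < b)
    (hbx : (b : ℝ) ≤ x) (hθ : 0 < θ) :
    (#b.primeFactors : ℝ) - 1 / θ ≤
      ∑ p ∈ b.primeFactors.filter (fun p : ℕ => (p : ℝ) ≤ x ^ θ),
        (1 - Real.log p / Real.log (x ^ θ)) := by
  have hb1 : (1 : ℝ) < b := by exact_mod_cast hb
  have hx1 : 1 < x := hb1.trans_le hbx
  have hlogx : 0 < Real.log x := Real.log_pos hx1
  have hlogy : Real.log (x ^ θ) = θ * Real.log x := Real.log_rpow (by linarith) θ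
  refine le_trans ?_ <|
    card_primeFactors_sub_le_sum_filter (zero_lt_one.trans hb).ne' (Real.one_lt_rpow hx1 hθ)
  refine sub_le_sub_left ?_ _
  calc Real.log b / Real.log (x ^ θ) ≤ Real.log x / Real.log (x ^ θ) := by
        rw [hlogy]; gcongr
    _ = 1 / θ := by rw [hlogy]; field_simp

theorem filter_primes_dvd_eq_primeFactors_filter {b : ℕ} (hb : b ≠ 0) {y z : ℝ}
    (hz : ∀ p ∈ b.primeFactors, z ≤ (p : ℝ)) :
    ((range (⌊y⌋₊ + 1)).filter fun p : ℕ => p.Prime ∧ z ≤ p ∧ (p : ℝ) ≤ y).filter (· ∣ b) =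
      b.primeFactors.filter fun p : ℕ => (p : ℝ) ≤ y := by
  ext p
  simp only [mem_filter, mem_range, Nat.mem_primeFactors, Nat.lt_succ_iff]
  constructor
  · rintro ⟨⟨-, hp, -, hpy⟩, hpb⟩
    exact ⟨⟨hp, hpb, hb⟩, hpy⟩
  · rintro ⟨⟨hp, hpb, -⟩, hpy⟩
    exact ⟨⟨Nat.le_floor hpy, hp, hz p (Nat.mem_primeFactors.mpr ⟨hp, hpb, hb⟩), hpy⟩, hpb⟩

theorem weighted_sieve_reduction_general (x z θ lam : ℝ)
    (hθ : θ ∈ Set.Ioo (0 : ℝ) 1) (hlam : 0 < lam)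
    (B : Finset ℕ) (hB : ∀ b ∈ B, 1 < b ∧ (b : ℝ) ≤ x)
    (hBz : ∀ b ∈ B, ∀ p ∈ Nat.primeFactors b, z ≤ (p : ℝ)) :
    (B.card : ℝ) -
        lam * ∑ p ∈ ((Finset.range (Nat.floor (x ^ θ) + 1)).filter fun p : ℕ =>
            p.Prime ∧ z ≤ (p : ℝ) ∧ (p : ℝ) ≤ x ^ θ),
          (1 - Real.log p / Real.log (x ^ θ)) * ((B.filter fun b : ℕ => p ∣ b).card : ℝ) ≤
      (1 + lam / θ) *
        ((B.filter fun b : ℕ => (b.primeFactors.card : ℝ) < 1 / lam + 1 / θ).card : ℝ) := by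
  set P := (range (⌊x ^ θ⌋₊ + 1)).filter fun p : ℕ => p.Prime ∧ z ≤ p ∧ (p : ℝ) ≤ x ^ θ
  set w : ℕ → ℝ := fun p => 1 - Real.log p / Real.log (x ^ θ)
  calc (#B : ℝ) - lam * ∑ p ∈ P, w p * #{b ∈ B | p ∣ b}
      = ∑ b ∈ B, (1 - lam * ∑ p ∈ P with p ∣ b, w p) := by
        rw [sum_mul_card_filter, sum_sub_distrib, mul_sum]; simp
    _ ≤ ∑ b ∈ B, (1 + lam / θ - lam * #b.primeFactors) := sum_le_sum fun b hb => by
        obtain ⟨hb1, hbx⟩ := hB b hb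
        have h := Nat.card_primeFactors_sub_inv_le_sum_filter hb1 hbx hθ.1
        rw [← filter_primes_dvd_eq_primeFactors_filter (by omega) (hBz b hb)] at h
        have := mul_le_mul_of_nonneg_left h hlam.le
        rw [mul_sub, mul_one_div] at this
        linarith
    _ ≤ (1 + lam / θ) * #{b ∈ B | (#b.primeFactors : ℝ) < 1 / lam + 1 / θ} := by
        refine sum_le_mul_card_filter _ (fun b _ => ?_) fun b _ hb => ?_
        · have : (0 : ℝ) ≤ lam * #b.primeFactors := by positivity
          linarith
        · have := mul_le_mul_of_nonneg_left (not_lt.mp hb) hlam.le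
          rw [mul_add, mul_one_div_cancel hlam.ne', mul_one_div] at this
          linarith

/-- the weighted-sieve reduction. Let `x ≥ 2`, `z ≥ 2`, `θ ∈ (0,1)`,
`λ > 0` and `y = x^θ`. If `B` is a finite set of integers `b` with `1 < b ≤ x` all of
whose prime factors are at least `z`, then
`#B − λ ∑_{z ≤ p ≤ y} (1 − log p/log y) #B_p ≤ (1 + λ/θ) #{b ∈ B : ω(b) < 1/λ + 1/θ}`. -/
theorem weighted_sieve_reduction (x z θ lam : ℝ) (hx : 2 ≤ x) (hz : 2 ≤ z)
    (hθ : θ ∈ Set.Ioo (0 : ℝ) 1) (hlam : 0 < lam)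
    (B : Finset ℕ) (hB : ∀ b ∈ B, 1 < b ∧ (b : ℝ) ≤ x)
    (hBz : ∀ b ∈ B, ∀ p ∈ Nat.primeFactors b, z ≤ (p : ℝ)) :
    (B.card : ℝ) -
        lam * ∑ p ∈ ((Finset.range (Nat.floor (x ^ θ) + 1)).filter fun p : ℕ =>
            p.Prime ∧ z ≤ (p : ℝ) ∧ (p : ℝ) ≤ x ^ θ),
          (1 - Real.log p / Real.log (x ^ θ)) * ((B.filter fun b : ℕ => p ∣ b).card : ℝ) ≤
      (1 + lam / θ) *
        ((B.filter fun b : ℕ => (b.primeFactors.card : ℝ) < 1 / lam + 1 / θ).card : ℝ) :=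
  weighted_sieve_reduction_general x z θ lam hθ hlam B hB hBz
end

section
/- Let x ≥ 3 and 1/4 < θ₁ ≤ 1/2. Let p₁ be a prime with x^{θ₁} < p₁ ≤ x^{1/2} and p₁ ≡ 3 (mod 4). Suppose p is a prime with p ≤ x, p ≡ 3 (mod 8), p₁ | (p − 1), and p − 1 has no prime factor q < p₁ with q ≡ 3 (mod 4). Then there exist a positive integer m and a prime p₂ such that p − 1 = 2·m·p₁·p₂, every prime factor of m is congruent to 1 (mod 4), p₂ ≡ 3 (mod 4), and p₂ ≥ p₁. -/
/-!
Write `p - 1 = 2n`, so that `n ≡ 1 (mod 4)`. Since `p₁ ∣ n`, the cofactor `n / p₁` is `≡ 3 (mod 4)`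
and hence has a prime factor `p₂ ≡ 3 (mod 4)`; the cofactor `m = n / (p₁ p₂)` is then
`≡ 1 (mod 4)`. If `m` had a prime factor `s ≡ 3 (mod 4)`, then `m / s ≡ 3 (mod 4)` would have one
as well, and by the sieve condition all four of these factors are at least `p₁`, so
`n ≥ p₁⁴ > x^{4θ₁} ≥ x > n`.
-/

theorem Nat.exists_prime_dvd_mod_four_eq_three {n : ℕ} (hn : n % 4 = 3) :
    ∃ q, q.Prime ∧ q ∣ n ∧ q % 4 = 3 := by
  induction n using Nat.recOnMul with
  | zero => simp at hn
  | one => simp at hn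
  | prime q hq => exact ⟨q, hq, dvd_rfl, hn⟩
  | mul a b iha ihb =>
    have hab : a % 4 = 3 ∨ b % 4 = 3 := by
      rw [Nat.mul_mod] at hn
      have := Nat.mod_lt a (by norm_num : 4 > 0)
      have := Nat.mod_lt b (by norm_num : 4 > 0)
      interval_cases a % 4 <;> interval_cases b % 4 <;> simp_all
    rcases hab with ha | hb
    · obtain ⟨q, hq, hqa, hq3⟩ := iha ha
      exact ⟨q, hq, hqa.mul_right b, hq3⟩
    · obtain ⟨q, hq, hqb, hq3⟩ := ihb hb
      exact ⟨q, hq, hqb.mul_left a, hq3⟩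

theorem Nat.exists_eq_mul_mul_of_sifted_mod_four {n P : ℕ} (hn : n % 4 = 1) (hP : P % 4 = 3)
    (hPn : P ∣ n) (hlt : n < P ^ 4) (hsift : ∀ q, q.Prime → q ∣ n → q % 4 = 3 → P ≤ q) :
    ∃ m q, q.Prime ∧ n = m * P * q ∧ (∀ s, s.Prime → s ∣ m → s % 4 = 1) ∧ q % 4 = 3 ∧ P ≤ q := by
  have hn_odd : Odd n := Nat.odd_iff.mpr (by omega)
  obtain ⟨r, rfl⟩ := hPn
  have hr : r % 4 = 3 := by rw [Nat.mul_mod, hP] at hn; omega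
  obtain ⟨q, hq, ⟨m, rfl⟩, hq3⟩ := Nat.exists_prime_dvd_mod_four_eq_three hr
  have hm : m % 4 = 1 := by rw [Nat.mul_mod, hq3] at hr; omega
  have hPq : P ≤ q := hsift q hq ⟨P * m, by ring⟩ hq3
  refine ⟨m, q, hq, by ring, fun s hs hsm => ?_, hq3, hPq⟩
  have hs_odd : s % 2 = 1 := Nat.odd_iff.mp (hn_odd.of_dvd_nat (hsm.mul_left q |>.mul_left P))
  by_contra hs1
  have hs3 : s % 4 = 3 := by omega
  obtain ⟨t, rfl⟩ := hsm
  have ht : t % 4 = 3 := by rw [Nat.mul_mod, hs3] at hm; omega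
  obtain ⟨q', hq', hq't, hq'3⟩ := Nat.exists_prime_dvd_mod_four_eq_three ht
  have hPs : P ≤ s := hsift s hs ⟨P * q * t, by ring⟩ hs3
  have hPq' : P ≤ q' := hsift q' hq' (hq't.mul_left s |>.mul_left q |>.mul_left P) hq'3
  have hPt : P ≤ t := hPq'.trans (Nat.le_of_dvd (by omega) hq't)
  have : P ^ 4 ≤ P * (q * (s * t)) := by
    calc P ^ 4 = P * (P * (P * P)) := by ring
      _ ≤ P * (q * (s * t)) := by gcongr
  omega

theorem Real.lt_pow_of_rpow_lt {x y θ : ℝ} {k : ℕ} (hx : 1 ≤ x) (hθ : 1 ≤ θ * k)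
    (hxy : x ^ θ < y) : x < y ^ k := by
  have hk : k ≠ 0 := by rintro rfl; simp at hθ; linarith
  calc x = x ^ (1 : ℝ) := (Real.rpow_one x).symm
    _ ≤ x ^ (θ * k) := Real.rpow_le_rpow_of_exponent_le hx hθ
    _ = (x ^ θ) ^ k := Real.rpow_mul_natCast (by linarith) θ k
    _ < y ^ k := pow_lt_pow_left₀ hxy (by positivity) hk

theorem switching_factorization_general (x : ℝ) (θ₁ : ℝ)
    (hθ₁ : 1 / 4 < θ₁)
    (p₁ : ℕ) (hp₁l : x ^ θ₁ < (p₁ : ℝ))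
    (hp₁mod : p₁ % 4 = 3)
    (p : ℕ) (hpx : (p : ℝ) ≤ x) (hpmod : p % 8 = 3)
    (hdvd : p₁ ∣ p - 1)
    (hsift : ∀ q : ℕ, q.Prime → q ∣ p - 1 → q < p₁ → q % 4 ≠ 3) :
    ∃ m p₂ : ℕ, 0 < m ∧ p₂.Prime ∧ p - 1 = 2 * m * p₁ * p₂ ∧
      (∀ q : ℕ, q.Prime → q ∣ m → q % 4 = 1) ∧ p₂ % 4 = 3 ∧ p₁ ≤ p₂ := by
  obtain ⟨n, hpn⟩ : ∃ n, p - 1 = 2 * n := ⟨(p - 1) / 2, by omega⟩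
  have hn : n % 4 = 1 := by omega
  have hp₁n : p₁ ∣ n :=
    (Nat.odd_iff.mpr (by omega) : Odd p₁).coprime_two_right.dvd_of_dvd_mul_left (hpn ▸ hdvd)
  have hlt : n < p₁ ^ 4 := by
    have hnp : (n : ℝ) < p := by exact_mod_cast (by omega : n < p)
    have hp3 : (3 : ℝ) ≤ p := by exact_mod_cast (by omega : 3 ≤ p)
    have hxp : x < (p₁ : ℝ) ^ 4 :=
      Real.lt_pow_of_rpow_lt (by linarith) (by push_cast; linarith) hp₁l
    exact_mod_cast hnp.trans_le hpx |>.trans hxp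
  obtain ⟨m, p₂, hp₂, hnm, hm, hp₂mod, hp₁p₂⟩ := Nat.exists_eq_mul_mul_of_sifted_mod_four hn hp₁mod
    hp₁n hlt fun q hq hqn hq3 => not_lt.mp fun hlt => hsift q hq (hpn ▸ hqn.mul_left 2) hlt hq3
  refine ⟨m, p₂, Nat.pos_of_ne_zero ?_, hp₂, by rw [hpn, hnm]; ring, hm, hp₂mod, hp₁p₂⟩
  rintro rfl
  omega

/-- the switching / factorization step. Let `x ≥ 3`,
`1/4 < θ₁ ≤ 1/2`, let `p₁` be a prime with `x^{θ₁} < p₁ ≤ x^{1/2}` and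
`p₁ ≡ 3 (mod 4)`, and let `p ≤ x` be a prime with `p ≡ 3 (mod 8)`, `p₁ | p − 1`, such
that `p − 1` has no prime factor `q < p₁` with `q ≡ 3 (mod 4)`. Then
`p − 1 = 2·m·p₁·p₂` where all prime factors of `m` are `≡ 1 (mod 4)`, `p₂` is a prime
with `p₂ ≡ 3 (mod 4)` and `p₂ ≥ p₁`. -/
theorem switching_factorization (x : ℝ) (hx : 3 ≤ x) (θ₁ : ℝ)
    (hθ₁ : 1 / 4 < θ₁) (hθ₁' : θ₁ ≤ 1 / 2)
    (p₁ : ℕ) (hp₁ : p₁.Prime) (hp₁l : x ^ θ₁ < (p₁ : ℝ))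
    (hp₁u : (p₁ : ℝ) ≤ x ^ ((1 : ℝ) / 2)) (hp₁mod : p₁ % 4 = 3)
    (p : ℕ) (hp : p.Prime) (hpx : (p : ℝ) ≤ x) (hpmod : p % 8 = 3)
    (hdvd : p₁ ∣ p - 1)
    (hsift : ∀ q : ℕ, q.Prime → q ∣ p - 1 → q < p₁ → q % 4 ≠ 3) :
    ∃ m p₂ : ℕ, 0 < m ∧ p₂.Prime ∧ p - 1 = 2 * m * p₁ * p₂ ∧
      (∀ q : ℕ, q.Prime → q ∣ m → q % 4 = 1) ∧ p₂ % 4 = 3 ∧ p₁ ≤ p₂ :=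
  switching_factorization_general x θ₁ hθ₁ p₁ hp₁l hp₁mod p hpx hpmod hdvd hsift
end
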